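/- Assume λ + μ² ≠ 0. Let P, Q, R, S : ℂ → ℂ be entire functions (not necessarily solving the pqrs-system) satisfying the C-relations: for every w ∈ ℂ, P(−w) = −(λ+μ²)⁻¹·e^{2(1−ℓ)w}·(μ·e^{2w}·R(w) + S(w)); Q(−w) = −(λ+μ²)⁻¹·e^{−2ℓw}·(λ·e^{2w}·R(w) − μ·S(w)); R(−w) = −e^{2(1−ℓ)w}·(μ·e^{2w}·P(w) + Q(w)); S(−w) = −e^{−2ℓw}·(λ·e^{2w}·P(w) − μ·Q(w)). Then the first integral is invariant under the C-transformation: for every w ∈ ℂ, 𝔇(−w) = 𝔇(w), where 𝔇(w) = e^{2(1−ℓ)w}·(P(w)·S(w) − Q(w)·R(w)). -/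
import Mathlib



theorem statement_6 (ell lam mu : ℂ) (hne : lam + mu ^ 2 ≠ 0) (P Q R S : ℂ → ℂ)
    (hP : Differentiable ℂ P) (hQ : Differentiable ℂ Q)
    (hR : Differentiable ℂ R) (hS : Differentiable ℂ S)
    (hC : ∀ w : ℂ,
      P (-w) = -(lam + mu ^ 2)⁻¹ * Complex.exp (2 * (1 - ell) * w) *
        (mu * Complex.exp (2 * w) * R w + S w) ∧
      Q (-w) = -(lam + mu ^ 2)⁻¹ * Complex.exp (-(2 * ell) * w) *
        (lam * Complex.exp (2 * w) * R w - mu * S w) ∧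
      R (-w) = -Complex.exp (2 * (1 - ell) * w) * (mu * Complex.exp (2 * w) * P w + Q w) ∧
      S (-w) = -Complex.exp (-(2 * ell) * w) * (lam * Complex.exp (2 * w) * P w - mu * Q w)) :
    ∀ w : ℂ,
      Complex.exp (2 * (1 - ell) * (-w)) * (P (-w) * S (-w) - Q (-w) * R (-w)) =
      Complex.exp (2 * (1 - ell) * (w)) * (P (w) * S (w) - Q (w) * R (w)) := by
  intro w
  obtain ⟨h1, h2, h3, h4⟩ := hC w
  have hu : Complex.exp (-(2 * ell) * w)
      = Complex.exp (2 * (1 - ell) * w) / Complex.exp (2 * w) := by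
    rw [← Complex.exp_sub]; ring_nf
  have hm : Complex.exp (2 * (1 - ell) * (-w))
      = (Complex.exp (2 * (1 - ell) * w))⁻¹ := by
    rw [← Complex.exp_neg]; ring_nf
  rw [h1, h2, h3, h4, hu, hm]
  field_simp
  ring
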